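/- The number of vertices of the polytope Π = {v ∈ ℝ^r : Σvᵢ = 0, −1 ≤ vᵢ ≤ 1} equals r!/((r/2)!)² when r is even, and r!/(((r−1)/2)!)² when r is odd. -/

import Mathlib

/-!
A point of `Pio r` is a vertex iff at most one of its coordinates lies in the open interval
`(-1, 1)`: two such coordinates can be moved by `±ε` in opposite directions inside `Pio r`,
whereas a coordinate equal to `±1` is an extreme point of `[-1, 1]`, so it is pinned along
every open segment through the point, and the zero-sum condition then pins the remaining one.
That remaining coordinate is minus a sum of `±1`'s, hence an integer in `(-1, 1)`, hence `0`.
So the vertices are the vectors `1_P - 1_N` with `P, N` disjoint of size `k = ⌊r/2⌋`, and there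
are `C(r, k) C(r - k, k) = r! / (k!)²` of them because `r - 2k ≤ 1`.
-/

def Pio (r : ℕ) : Set (Fin r → ℝ) :=
  {v | (∑ i, v i) = 0 ∧ ∀ i, -1 ≤ v i ∧ v i ≤ 1}

open Finset Nat

section signVec

variable {ι : Type*} [DecidableEq ι]

def signVec (P N : Finset ι) : ι → ℝ :=
  fun i => (if i ∈ P then 1 else 0) - (if i ∈ N then 1 else 0)

lemma signVec_filter [Fintype ι] {v : ι → ℝ} (hv : ∀ i, v i = -1 ∨ v i = 0 ∨ v i = 1) :
    signVec {i | v i = 1} {i | v i = -1} = v := by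
  ext i
  rcases hv i with h | h | h <;> simp [signVec, h] <;> norm_num

lemma sum_signVec [Fintype ι] (P N : Finset ι) : ∑ i, signVec P N i = #P - #N := by
  simp [signVec, Finset.sum_sub_distrib]

variable {P N : Finset ι} {i : ι}

lemma signVec_eq_one_iff (h : Disjoint P N) : signVec P N i = 1 ↔ i ∈ P := by
  by_cases hP : i ∈ P <;> by_cases hN : i ∈ N <;> simp [signVec, hP, hN]
  · exact disjoint_left.1 h hP hN
  · norm_num

lemma signVec_eq_neg_one_iff (h : Disjoint P N) : signVec P N i = -1 ↔ i ∈ N := by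
  by_cases hP : i ∈ P <;> by_cases hN : i ∈ N <;> simp [signVec, hP, hN]
  · exact disjoint_left.1 h hP hN
  · norm_num

lemma abs_signVec_lt_one_iff (h : Disjoint P N) : |signVec P N i| < 1 ↔ i ∉ P ∪ N := by
  by_cases hP : i ∈ P <;> by_cases hN : i ∈ N <;> simp [signVec, hP, hN]
  exact disjoint_left.1 h hP hN

lemma injOn_signVec :
    {p : Finset ι × Finset ι | Disjoint p.1 p.2}.InjOn (fun p => signVec p.1 p.2) := by
  rintro ⟨P, N⟩ hPN ⟨P', N'⟩ hPN' (heq : signVec P N = signVec P' N')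
  ext i
  · rw [← signVec_eq_one_iff hPN, ← signVec_eq_one_iff hPN', heq]
  · rw [← signVec_eq_neg_one_iff hPN, ← signVec_eq_neg_one_iff hPN', heq]

end signVec

lemma card_disjoint_pairs {α : Type*} [Fintype α] [DecidableEq α] (k : ℕ) :
    #{p : Finset α × Finset α | Disjoint p.1 p.2 ∧ #p.1 = k ∧ #p.2 = k}
      = (Fintype.card α).choose k * (Fintype.card α - k).choose k := by
  rw [card_filter, ← univ_product_univ, sum_product]
  have hinner : ∀ P : Finset α, (∑ N, if Disjoint P N ∧ #P = k ∧ #N = k then 1 else 0)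
      = if #P = k then (Fintype.card α - k).choose k else 0 := by
    intro P
    split_ifs with hP
    · rw [← card_filter, ← hP, ← card_compl, ← card_powersetCard]
      congr 1
      ext N
      simp [hP, mem_powersetCard, subset_compl_iff_disjoint_left]
    · simp [hP]
  have hsized : ({P | #P = k} : Finset (Finset α)) = powersetCard k univ := by
    ext P
    simp
  simp only [hinner, sum_ite, sum_const_zero, add_zero, sum_const, smul_eq_mul]
  rw [hsized, card_powersetCard, Finset.card_univ]

lemma Nat.factorial_div_factorial_half_sq (n : ℕ) :
    n ! / (n / 2)! ^ 2 = n.choose (n / 2) * (n - n / 2).choose (n / 2) := by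
  refine Nat.div_eq_of_eq_mul_left (by positivity) ?_
  have h1 := Nat.choose_mul_factorial_mul_factorial (Nat.div_le_self n 2)
  have h2 := Nat.choose_mul_factorial_mul_factorial (show n / 2 ≤ n - n / 2 by omega)
  have h3 : (n - n / 2 - n / 2)! = 1 := Nat.factorial_eq_one.2 (by omega)
  rw [h3, mul_one] at h2
  rw [← h1, ← h2]
  ring

namespace Pio

variable {r : ℕ}

lemma abs_eq_one_of_not_lt {v : Fin r → ℝ} (hv : v ∈ Pio r) {i : Fin r} (hi : ¬ |v i| < 1) :
    |v i| = 1 :=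
  (abs_le.2 (hv.2 i)).eq_of_not_lt hi

lemma add_single_sub_single_mem {v : Fin r → ℝ} (hv : v ∈ Pio r) {i j : Fin r} (hij : i ≠ j)
    {ε : ℝ} (hi : |v i| + |ε| ≤ 1) (hj : |v j| + |ε| ≤ 1) :
    v + (Pi.single i ε - Pi.single j ε) ∈ Pio r := by
  refine ⟨by simp [Finset.sum_add_distrib, hv.1], fun k => ?_⟩
  rw [← abs_le]
  rcases eq_or_ne k i with rfl | hki
  · simpa [hij] using (abs_add_le _ _).trans hi
  rcases eq_or_ne k j with rfl | hkj
  · simpa [hki, ← sub_eq_add_neg] using (abs_sub _ _).trans hj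
  · simpa [hki, hkj] using abs_le.2 (hv.2 k)

lemma apply_eq_of_mem_openSegment {x y v : Fin r → ℝ} (hx : x ∈ Pio r) (hy : y ∈ Pio r)
    (hv : v ∈ openSegment ℝ x y) {k : Fin r} (hk : |v k| = 1) : x k = v k := by
  have hext : v k ∈ (Set.Icc (-1 : ℝ) 1).extremePoints ℝ := by
    rw [Set.extremePoints_Icc (by norm_num)]
    rcases (abs_eq zero_le_one).1 hk with h | h <;> simp [h]
  refine (mem_extremePoints_iff_left.1 hext).2 (x k) (hx.2 k) (y k) (hy.2 k) ?_
  obtain ⟨a, b, ha, hb, hab, rfl⟩ := hv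
  exact ⟨a, b, ha, hb, hab, rfl⟩

theorem mem_extremePoints_iff {v : Fin r → ℝ} :
    v ∈ (Pio r).extremePoints ℝ ↔ v ∈ Pio r ∧ {i | |v i| < 1}.Subsingleton := by
  constructor
  · refine fun hv => ⟨hv.1, fun i hi j hj => ?_⟩
    by_contra hij
    set ε := min (1 - |v i|) (1 - |v j|)
    have hε : 0 < ε := lt_min (by simpa using hi) (by simpa using hj)
    have hεi : |v i| + |ε| ≤ 1 := by
      rw [abs_of_pos hε]; linarith [min_le_left (1 - |v i|) (1 - |v j|)]
    have hεj : |v j| + |ε| ≤ 1 := by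
      rw [abs_of_pos hε]; linarith [min_le_right (1 - |v i|) (1 - |v j|)]
    have hmid : v ∈ openSegment ℝ (v + (Pi.single i ε - Pi.single j ε))
        (v + (Pi.single i (-ε) - Pi.single j (-ε))) := by
      refine ⟨1 / 2, 1 / 2, by norm_num, by norm_num, by norm_num, ?_⟩
      ext k
      simp only [Pi.add_apply, Pi.smul_apply, Pi.sub_apply, Pi.single_apply, smul_eq_mul]
      split_ifs <;> ring
    have hfixed := congrFun ((mem_extremePoints_iff_left.1 hv).2 _
      (add_single_sub_single_mem hv.1 hij hεi hεj) _
      (add_single_sub_single_mem hv.1 hij (by rwa [abs_neg]) (by rwa [abs_neg])) hmid) i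
    simp [hij] at hfixed
    exact hε.ne' hfixed
  · rintro ⟨hv, hsub⟩
    refine mem_extremePoints_iff_left.2 ⟨hv, fun x hx y hy hxy => funext fun k => ?_⟩
    have hpinned : ∀ m, ¬ |v m| < 1 → x m = v m := fun m hm =>
      apply_eq_of_mem_openSegment hx hy hxy (abs_eq_one_of_not_lt hv hm)
    by_cases hk : |v k| < 1
    · have hsum : ∑ m, (x - v) m = (x - v) k :=
        sum_eq_single k (fun m _ hmk => sub_eq_zero.2
          (hpinned m fun hm => hmk (hsub hm hk))) (by simp)
      simp only [Pi.sub_apply, Finset.sum_sub_distrib, hx.1, hv.1, sub_zero] at hsum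
      linarith
    · exact hpinned k hk

lemma eq_neg_one_or_zero_or_one_of_mem_extremePoints {v : Fin r → ℝ}
    (hv : v ∈ (Pio r).extremePoints ℝ) (i : Fin r) : v i = -1 ∨ v i = 0 ∨ v i = 1 := by
  obtain ⟨hPio, hsub⟩ := mem_extremePoints_iff.1 hv
  by_cases hi : |v i| < 1
  swap
  · rcases (abs_eq zero_le_one).1 (abs_eq_one_of_not_lt hPio hi) with h | h <;> simp [h]
  have hint : v i ∈ (Int.castAddHom ℝ).range := by
    have hcoord : v i = -∑ k ∈ univ.erase i, v k := by
      linarith [sum_erase_add univ v (mem_univ i), hPio.1]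
    rw [hcoord]
    refine neg_mem (sum_mem fun k hk => ?_)
    have hk1 : |v k| = 1 :=
      abs_eq_one_of_not_lt hPio fun hk' => (mem_erase.1 hk).1 (hsub hk' hi)
    rcases (abs_eq zero_le_one).1 hk1 with h | h
    · exact ⟨1, by simp [h]⟩
    · exact ⟨-1, by simp [h]⟩
  obtain ⟨n, hn⟩ := hint
  have : |n| < 1 := by exact_mod_cast (show |(n : ℝ)| < 1 by simpa [← hn] using hi)
  simp [← hn, Int.abs_lt_one_iff.1 this]

lemma signVec_mem_extremePoints_iff {P N : Finset (Fin r)} (h : Disjoint P N) :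
    signVec P N ∈ (Pio r).extremePoints ℝ ↔ #P = r / 2 ∧ #N = r / 2 := by
  have hmem : signVec P N ∈ Pio r ↔ #P = #N := by
    have hbound : ∀ i, -1 ≤ signVec P N i ∧ signVec P N i ≤ 1 := fun i => by
      by_cases hP : i ∈ P <;> by_cases hN : i ∈ N <;> norm_num [signVec, hP, hN]
    simp only [Pio, Set.mem_ofPred_eq, sum_signVec, sub_eq_zero, Nat.cast_inj, hbound,
      implies_true, and_true]
  have hinterior : {i | |signVec P N i| < 1} = ↑(P ∪ N)ᶜ := by
    ext i
    simp [abs_signVec_lt_one_iff h]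
  have hcard : #(P ∪ N)ᶜ + (#P + #N) = r := by
    rw [← card_union_of_disjoint h, card_compl_add_card, Fintype.card_fin]
  rw [mem_extremePoints_iff, hmem, hinterior, ← card_le_one_iff_subsingleton]
  omega

theorem extremePoints_eq_image_signVec :
    (Pio r).extremePoints ℝ = (fun p => signVec p.1 p.2) ''
      {p : Finset (Fin r) × Finset (Fin r) | Disjoint p.1 p.2 ∧ #p.1 = r / 2 ∧ #p.2 = r / 2} := by
  ext v
  constructor
  · intro hv
    have hv_eq := signVec_filter (eq_neg_one_or_zero_or_one_of_mem_extremePoints hv)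
    rw [← hv_eq] at hv ⊢
    have hdisj : Disjoint ({i | v i = 1} : Finset (Fin r)) ({i | v i = -1} : Finset (Fin r)) :=
      disjoint_filter.2 fun i _ h => by rw [h]; norm_num
    exact ⟨(_, _), ⟨hdisj, (signVec_mem_extremePoints_iff hdisj).1 hv⟩, rfl⟩
  · rintro ⟨⟨P, N⟩, ⟨h, hc⟩, rfl⟩
    exact (signVec_mem_extremePoints_iff h).2 hc

theorem ncard_extremePoints : ((Pio r).extremePoints ℝ).ncard = r ! / (r / 2)! ^ 2 := by
  rw [extremePoints_eq_image_signVec, (injOn_signVec.mono fun p hp => hp.1).ncard_image,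
    Set.ncard_eq_toFinset_card', Set.toFinset_ofPred, card_disjoint_pairs, Fintype.card_fin,
    Nat.factorial_div_factorial_half_sq]

end Pio

theorem stmt6 (r : ℕ) :
    (Set.extremePoints ℝ (Pio r)).ncard =
      if Even r then r.factorial / ((r / 2).factorial) ^ 2
      else r.factorial / (((r - 1) / 2).factorial) ^ 2 := by
  rw [Pio.ncard_extremePoints]
  split_ifs with hr
  · rfl
  · obtain ⟨m, rfl⟩ := Nat.not_even_iff_odd.1 hr
    congr 3
    omega
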